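/- arXiv:2306.14635 — 2 statements merged into one kernel-verified Lean document; each statement's English description precedes it below -/
import Mathlib

section
/- Let q, q', k, m be positive integers with k ≥ 1 and m ≥ 1 satisfying 3·q + 1 = 2^k·q' and 3·q' + 1 = 2^m·q. Then q = 1, q' = 1, k = 2 and m = 2. In other words, the only two-track periodic cycle of the 3q+1 transformation on the positive integers is the trivial cycle through 1 with k = m = 2. -/
theorem two_track_cycle_3q_add_one_trivial (q q' : ℤ) (k m : ℕ)
    (hq : 0 < q) (hq' : 0 < q') (hk : 1 ≤ k) (hm : 1 ≤ m)
    (h1 : 3 * q + 1 = 2 ^ k * q') (h2 : 3 * q' + 1 = 2 ^ m * q) :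
    q = 1 ∧ q' = 1 ∧ k = 2 ∧ m = 2 := by
  have hq1 : 1 ≤ q := hq
  have hq'1 : 1 ≤ q' := hq'
  have key : (3 * q + 1) * (3 * q' + 1) = (2:ℤ) ^ (k + m) * (q * q') := by
    rw [h1, h2, pow_add]; ring
  have hqq : (1:ℤ) ≤ q * q' := one_le_mul_of_one_le_of_one_le hq1 hq'1
  -- bounds on 2^(k+m)
  have hub : (2:ℤ) ^ (k + m) ≤ 16 := by
    nlinarith [mul_nonneg (sub_nonneg.2 hq1) (sub_nonneg.2 hq'1)]
  have hlb : (9:ℤ) < 2 ^ (k + m) := by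
    nlinarith [mul_nonneg (sub_nonneg.2 hq1) (sub_nonneg.2 hq'1)]
  have hubn : 2 ^ (k + m) ≤ 2 ^ 4 := by exact_mod_cast hub
  have hlbn' : 9 < 2 ^ (k + m) := by exact_mod_cast hlb
  have hlbn : 2 ^ 3 < 2 ^ (k + m) := by linarith
  have h4 : k + m = 4 := by
    have h1' : k + m ≤ 4 := (Nat.pow_le_pow_iff_right (by norm_num)).1 hubn
    have h2' : 3 < k + m := (Nat.pow_lt_pow_iff_right (by norm_num)).1 hlbn
    omega
  rw [h4] at key
  have hsum : q + q' ≤ 2 := by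
    nlinarith [mul_nonneg (sub_nonneg.2 hq1) (sub_nonneg.2 hq'1)]
  have hqe : q = 1 := by omega
  have hq'e : q' = 1 := by omega
  subst hqe hq'e
  have hk2 : k = 2 := by
    have : (2:ℤ) ^ k = 4 := by linarith [h1]
    have hk3 : k ≤ 3 := by omega
    interval_cases k <;> omega
  exact ⟨rfl, rfl, hk2, by omega⟩
end

section
/- Let q, q', k, m be positive integers with k ≥ 1 and m ≥ 1 satisfying 3·q − 1 = 2^k·q' and 3·q' − 1 = 2^m·q. Then (q, q', k, m) is one of exactly the three tuples (1, 1, 1, 1), (5, 7, 1, 2), (7, 5, 2, 1). In other words, the two-track periodic cycles of the 3q−1 transformation on the positive integers are exactly the cycle through 1 (with k = m = 1) and the cycle through 5 and 7. -/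
theorem two_track_cycle_3q_sub_one_classification (q q' : ℤ) (k m : ℕ)
    (hq : 0 < q) (hq' : 0 < q') (hk : 1 ≤ k) (hm : 1 ≤ m)
    (h1 : 3 * q - 1 = 2 ^ k * q') (h2 : 3 * q' - 1 = 2 ^ m * q) :
    (q, q', k, m) = (1, 1, 1, 1) ∨ (q, q', k, m) = (5, 7, 1, 2) ∨
      (q, q', k, m) = (7, 5, 2, 1) := by
  have h3 : (3 * q - 1) * (3 * q' - 1) = 2 ^ (k + m) * (q * q') := by
    rw [h1, h2, pow_add]; ring
  have hlt : (2 : ℤ) ^ (k + m) < 9 := by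
    have hqq : 1 ≤ q * q' := by nlinarith
    nlinarith [pow_pos (by norm_num : (0:ℤ) < 2) (k + m)]
  have hkm : k + m ≤ 3 := by
    by_contra h
    push_neg at h
    have : (2 : ℤ) ^ 4 ≤ 2 ^ (k + m) := pow_le_pow_right₀ (by norm_num) (by omega)
    norm_num at this; linarith
  have hk2 : k ≤ 2 := by omega
  have hm2 : m ≤ 2 := by omega
  interval_cases k <;> interval_cases m <;> simp only [Prod.mk.injEq] <;> norm_num at h1 h2 ⊢ <;> omega
end
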